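/- The map (u,v) ↦ γ⁻¹(t γ(u) + (1−t) γ(v)) preserves 1-Lipschitzness: let γ(s) = tanh(s), t ∈ [0,1], and f, g : ℝ^N → ℝ be 1-Lipschitz. Then x ↦ γ⁻¹(t γ(f(x)) + (1−t) γ(g(x))) is 1-Lipschitz on ℝ^N. -/

import Mathlib

/-!
Write `M u v = γ⁻¹(t γ(u) + (1 - t) γ(v))` with `γ = tanh`. Then `M` is monotone in each variable,
and it commutes with diagonal translations up to an inequality: `M (u + c) (v + c) ≤ M u v + c` for
`c ≥ 0`. Indeed, the addition formula gives `γ(s + c) = h(γ(s))` for the Möbius map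
`h(x) = (x + γ c) / (1 + x γ c)`, and since `h` is concave on `(-1, ∞)` the bound is Jensen's
inequality for `h`. For 1-Lipschitz `f, g` and `d = dist x y` this gives
`M (f y) (g y) ≤ M (f x + d) (g x + d) ≤ M (f x) (g x) + d`.
-/

noncomputable section

/-- The inverse hyperbolic tangent, `γ⁻¹` for `γ = tanh`. -/
def arctanh (x : ℝ) : ℝ := (1 / 2) * Real.log ((1 + x) / (1 - x))

open Set Real

theorem LipschitzWith.comp₂_of_monotone_of_map_add_le {α : Type*} [PseudoMetricSpace α]
    {K : NNReal} {M : ℝ → ℝ → ℝ}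
    (hmono : ∀ ⦃u u' v v' : ℝ⦄, u ≤ u' → v ≤ v' → M u v ≤ M u' v')
    (hadd : ∀ (u v : ℝ) ⦃c : ℝ⦄, 0 ≤ c → M (u + c) (v + c) ≤ M u v + c)
    {f g : α → ℝ} (hf : LipschitzWith K f) (hg : LipschitzWith K g) :
    LipschitzWith K (fun x => M (f x) (g x)) :=
  LipschitzWith.of_le_add_mul K fun x y =>
    (hmono (hf.le_add_mul x y) (hg.le_add_mul x y)).trans (hadd _ _ (by positivity))

namespace Real

theorem tanh_mem_Ioo (x : ℝ) : tanh x ∈ Ioo (-1) 1 := ⟨neg_one_lt_tanh x, tanh_lt_one x⟩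

theorem tanh_le_tanh_iff {x y : ℝ} : tanh x ≤ tanh y ↔ x ≤ y := by
  rw [← artanh_le_artanh_iff (tanh_mem_Ioo x) (tanh_mem_Ioo y), artanh_tanh, artanh_tanh]

@[gcongr]
theorem tanh_le_tanh {x y : ℝ} (h : x ≤ y) : tanh x ≤ tanh y := tanh_le_tanh_iff.2 h

theorem tanh_add (x y : ℝ) : tanh (x + y) = (tanh x + tanh y) / (1 + tanh x * tanh y) := by
  have hx := cosh_pos x
  have hy := cosh_pos y
  have hxy : 0 < cosh x * cosh y + sinh x * sinh y := by
    rw [← cosh_add]; exact cosh_pos _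
  simp only [tanh_eq_sinh_div_cosh, sinh_add, cosh_add]
  field_simp

end Real

theorem concaveOn_div_one_add_mul {T : ℝ} (hT : T ∈ Ico 0 1) :
    ConcaveOn ℝ (Ioi (-1)) (fun x => (x + T) / (1 + x * T)) := by
  have hpos : ∀ x ∈ Ioi (-1 : ℝ), 0 < 1 + x * T := fun x hx => by
    simp only [mem_Ioi] at hx; nlinarith [hT.1, hT.2]
  refine ⟨convex_Ioi _, fun x hx y hy a b ha hb hab => ?_⟩
  have hz := hpos _ ((convex_Ioi _) hx hy ha hb hab)
  have hx' := hpos x hx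
  have hy' := hpos y hy
  obtain rfl : b = 1 - a := by linarith
  simp only [smul_eq_mul] at hz ⊢
  -- After clearing denominators, Jensen's gap is exactly `a (1 - a) T (1 - T²) (x - y)²`.
  rw [mul_div_assoc', mul_div_assoc', div_add_div _ _ hx'.ne' hy'.ne',
    div_le_div_iff₀ (by positivity) hz]
  have hT2 : 0 ≤ 1 - T ^ 2 := by nlinarith [hT.1, hT.2]
  linear_combination mul_nonneg (mul_nonneg (mul_nonneg (mul_nonneg ha hb) hT.1) hT2) (sq_nonneg (x - y))

theorem arctanh_eq_artanh {x : ℝ} (hx : x ∈ Icc (-1) 1) : arctanh x = artanh x :=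
  (artanh_eq_half_log hx).symm

def tanhMean (t u v : ℝ) : ℝ := arctanh (t * tanh u + (1 - t) * tanh v)

section tanhMean

variable {t : ℝ}

theorem convexComb_tanh_mem_Ioo (ht : t ∈ Icc 0 1) (u v : ℝ) :
    t * tanh u + (1 - t) * tanh v ∈ Ioo (-1) 1 :=
  convex_Ioo (-1 : ℝ) 1 (tanh_mem_Ioo u) (tanh_mem_Ioo v) ht.1 (sub_nonneg.2 ht.2)
    (add_sub_cancel t 1)

theorem tanhMean_eq_artanh (ht : t ∈ Icc 0 1) (u v : ℝ) :
    tanhMean t u v = artanh (t * tanh u + (1 - t) * tanh v) :=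
  arctanh_eq_artanh (Ioo_subset_Icc_self (convexComb_tanh_mem_Ioo ht u v))

theorem tanhMean_mono (ht : t ∈ Icc 0 1) ⦃u u' v v' : ℝ⦄ (hu : u ≤ u') (hv : v ≤ v') :
    tanhMean t u v ≤ tanhMean t u' v' := by
  rw [tanhMean_eq_artanh ht, tanhMean_eq_artanh ht]
  refine artanh_le_artanh (convexComb_tanh_mem_Ioo ht u v).1
    (convexComb_tanh_mem_Ioo ht u' v').2 ?_
  have := ht.1
  have := sub_nonneg.2 ht.2
  gcongr

theorem tanhMean_add_le (ht : t ∈ Icc 0 1) (u v : ℝ) ⦃c : ℝ⦄ (hc : 0 ≤ c) :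
    tanhMean t (u + c) (v + c) ≤ tanhMean t u v + c := by
  have hw := convexComb_tanh_mem_Ioo ht u v
  have hshift : tanhMean t u v + c =
      artanh (tanh (artanh (t * tanh u + (1 - t) * tanh v) + c)) := by
    rw [artanh_tanh, tanhMean_eq_artanh ht]
  rw [hshift, tanhMean_eq_artanh ht]
  refine artanh_le_artanh (convexComb_tanh_mem_Ioo ht _ _).1 (tanh_lt_one _) ?_
  simp only [tanh_add, tanh_artanh hw]
  have hc' : tanh c ∈ Ico 0 1 :=
    ⟨tanh_zero ▸ tanh_le_tanh hc, tanh_lt_one c⟩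
  simpa only [smul_eq_mul] using (concaveOn_div_one_add_mul hc').2 (tanh_mem_Ioo u).1
    (tanh_mem_Ioo v).1 ht.1 (sub_nonneg.2 ht.2) (add_sub_cancel t 1)

end tanhMean

theorem stmt15 (N : ℕ) (t : ℝ) (ht : t ∈ Set.Icc (0 : ℝ) 1)
    (f g : EuclideanSpace ℝ (Fin N) → ℝ)
    (hf : LipschitzWith 1 f) (hg : LipschitzWith 1 g) :
    LipschitzWith 1 (fun x =>
      arctanh (t * Real.tanh (f x) + (1 - t) * Real.tanh (g x))) :=
  LipschitzWith.comp₂_of_monotone_of_map_add_le (M := tanhMean t) (tanhMean_mono ht)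
    (tanhMean_add_le ht) hf hg
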